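/- Let j ∈ ℝ with 2j ∉ ℤ, let p ∈ ℕ, and set m := j−p. Then lim_{q→+∞, q real} q^{−(j+m)} · (q+i)^j · (q−i)^m · ∑_{k=0}^{p} ((−j)_k (m−j)_k / ((m+1)_k · k!)) · ((q−i)/(q+i))^k = Γ(2j+1)·Γ(m+1) / (Γ(j+m+1)·Γ(j+1)), where (q+i)^j, (q−i)^m are principal complex powers and q^{j+m} is the real power of the positive real q. -/

import Mathlib

/-!
At `(q - i)/(q + i) = 1` the terminating sum is `₂F₁(-p, -j; m + 1; 1)`, which the Chu–Vandermonde
identity evaluates to `(2j - p + 1)_p / (j - p + 1)_p`; by `Γ(z + p) = (z)_p Γ(z)` this is the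
stated ratio of Gamma functions. Since `2j ∉ ℤ`, neither `j - p + 1` nor `2j - p + 1` is a
non-positive integer. On the analytic side, `q^{-s} (q + a)^s = (1 + a/q)^s → 1` for real `q → ∞`,
and `(q - i)/(q + i) → 1`, so the whole expression tends to the value of the sum at `1`.
-/

/-- Ascending Pochhammer symbol `(a)_k = a (a+1) ⋯ (a+k-1)`. -/
noncomputable def pochC (a : ℂ) (k : ℕ) : ℂ := ∏ i ∈ Finset.range k, (a + i)

open Polynomial Finset

theorem pochC_eq_ascPochhammer_eval (a : ℂ) (k : ℕ) : pochC a k = (ascPochhammer ℂ k).eval a := by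
  induction k with
  | zero => simp [pochC]
  | succ k ih => rw [pochC, prod_range_succ, ← pochC, ih, ascPochhammer_succ_eval]

section ChuVandermonde

variable {R : Type*} [CommRing R]

theorem descPochhammer_smeval_eq_eval (r : R) (n : ℕ) :
    (descPochhammer ℤ n).smeval r = (descPochhammer R n).eval r := by
  rw [descPochhammer_smeval_eq_ascPochhammer, ascPochhammer_smeval_eq_eval,
    descPochhammer_eval_eq_ascPochhammer]

theorem descPochhammer_eval_add (r s : R) (n : ℕ) :
    (descPochhammer R n).eval (r + s) = ∑ ij ∈ antidiagonal n,
      n.choose ij.1 * ((descPochhammer R ij.1).eval r * (descPochhammer R ij.2).eval s) := by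
  simpa only [descPochhammer_smeval_eq_eval] using
    Ring.descPochhammer_smeval_add n (Commute.all r s)

theorem descPochhammer_eval_neg (r : R) (n : ℕ) :
    (descPochhammer R n).eval (-r) = (-1) ^ n * (ascPochhammer R n).eval r := by
  rw [← neg_neg r, ascPochhammer_eval_neg_eq_descPochhammer, neg_neg, ← mul_assoc, ← mul_pow,
    neg_one_mul, neg_neg, one_pow, one_mul]

theorem ascPochhammer_eval_neg_natCast (p n : ℕ) :
    (ascPochhammer R n).eval (-(p : R)) = (-1) ^ n * n.factorial * p.choose n := by
  rw [ascPochhammer_eval_neg_eq_descPochhammer, descPochhammer_eval_eq_descFactorial,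
    Nat.descFactorial_eq_factorial_mul_choose, Nat.cast_mul, mul_assoc]

theorem ascPochhammer_eval_mul_eval_add (r : R) (m n : ℕ) :
    (ascPochhammer R m).eval r * (ascPochhammer R n).eval (r + m) =
      (ascPochhammer R (m + n)).eval r := by
  rw [← ascPochhammer_mul, eval_mul, eval_comp, eval_add, eval_X, eval_natCast]

/-- Chu–Vandermonde, with the falling factorials read backwards as rising ones. -/
theorem sum_neg_one_pow_mul_choose_mul_ascPochhammer_eval (b c : R) (p : ℕ) :
    ∑ k ∈ range (p + 1), (-1) ^ k * p.choose k * (ascPochhammer R k).eval b *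
      (ascPochhammer R (p - k)).eval (c + k) = (ascPochhammer R p).eval (c - b) := by
  have h := descPochhammer_eval_add (-b) (c + p - 1) p
  rw [Nat.sum_antidiagonal_eq_sum_range_succ (fun i j => p.choose i *
    ((descPochhammer R i).eval (-b) * (descPochhammer R j).eval (c + p - 1)))] at h
  rw [descPochhammer_eval_eq_ascPochhammer, show -b + (c + p - 1) - p + 1 = c - b by ring] at h
  rw [h]
  refine sum_congr rfl fun k hk => ?_
  have hkp : k ≤ p := Nat.lt_succ_iff.mp (mem_range.mp hk)
  rw [descPochhammer_eval_neg, descPochhammer_eval_eq_ascPochhammer, Nat.cast_sub hkp,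
    show c + p - 1 - (p - k) + 1 = c + k by ring]
  ring

end ChuVandermonde

theorem sum_ascPochhammer_eval_neg_natCast_div {K : Type*} [Field K] [CharZero K] (b c : K)
    (p : ℕ) (hc : (ascPochhammer K p).eval c ≠ 0) :
    ∑ k ∈ range (p + 1), (ascPochhammer K k).eval b * (ascPochhammer K k).eval (-(p : K)) /
      ((ascPochhammer K k).eval c * k.factorial) =
        (ascPochhammer K p).eval (c - b) / (ascPochhammer K p).eval c := by
  rw [← sum_neg_one_pow_mul_choose_mul_ascPochhammer_eval b c p, sum_div]
  refine sum_congr rfl fun k hk => ?_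
  have hsplit := ascPochhammer_eval_mul_eval_add c k (p - k)
  rw [Nat.add_sub_cancel' (Nat.lt_succ_iff.mp (mem_range.mp hk))] at hsplit
  have hck : (ascPochhammer K k).eval c ≠ 0 := left_ne_zero_of_mul (hsplit ▸ hc)
  have hck' : (ascPochhammer K (p - k)).eval (c + k) ≠ 0 := right_ne_zero_of_mul (hsplit ▸ hc)
  have hfac : (k.factorial : K) ≠ 0 := Nat.cast_ne_zero.mpr k.factorial_ne_zero
  rw [ascPochhammer_eval_neg_natCast, ← hsplit]
  field_simp

open Filter Topology Complex

theorem Complex.Gamma_add_nat_mul_Gamma_div_mul {z w : ℂ} (hz : ∀ k : ℕ, z ≠ -k)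
    (hw : ∀ k : ℕ, w ≠ -k) (n : ℕ) :
    Gamma (z + n) * Gamma w / (Gamma z * Gamma (w + n)) =
      (ascPochhammer ℂ n).eval z / (ascPochhammer ℂ n).eval w := by
  rw [mul_div_mul_comm, ← inv_div (Gamma (w + n)), Gamma_add_nat_div_Gamma_eq z hz,
    Gamma_add_nat_div_Gamma_eq w hw, div_eq_mul_inv]

theorem Complex.ofReal_add_intCast_ne_neg_natCast {x : ℝ} (hx : ∀ n : ℤ, x ≠ n) (n : ℤ)
    (k : ℕ) : (x : ℂ) + n ≠ -k := by
  intro h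
  have hx' : (x : ℂ) = ((-k - n : ℤ) : ℂ) := by push_cast; linear_combination h
  exact hx (-k - n) (mod_cast hx')

theorem Complex.ofReal_mul_cpow {r : ℝ} (hr : 0 < r) (z s : ℂ) :
    ((r : ℂ) * z) ^ s = (r : ℂ) ^ s * z ^ s := by
  have hr0 : (r : ℂ) ≠ 0 := ofReal_ne_zero.mpr hr.ne'
  rcases eq_or_ne z 0 with rfl | hz
  · rcases eq_or_ne s 0 with rfl | hs <;> simp [*]
  rw [cpow_def_of_ne_zero (mul_ne_zero hr0 hz), log_ofReal_mul hr hz, add_mul, exp_add,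
    cpow_def_of_ne_zero hr0, cpow_def_of_ne_zero hz, ofReal_log hr.le]

theorem Complex.tendsto_one_add_mul_ofReal_inv (a : ℂ) :
    Tendsto (fun q : ℝ => 1 + a * ((q : ℂ))⁻¹) atTop (𝓝 1) := by
  simpa using (tendsto_inv_atTop_zero.ofReal.const_mul a).const_add 1

theorem Complex.tendsto_ofReal_sub_div_ofReal_add (a : ℂ) :
    Tendsto (fun q : ℝ => ((q : ℂ) - a) / ((q : ℂ) + a)) atTop (𝓝 1) := by
  have h := (tendsto_one_add_mul_ofReal_inv (-a)).div (tendsto_one_add_mul_ofReal_inv a)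
    one_ne_zero
  rw [div_one] at h
  refine h.congr' ?_
  filter_upwards [eventually_ne_atTop 0] with q hq
  have hq' : (q : ℂ) ≠ 0 := ofReal_ne_zero.mpr hq
  simp only [Pi.div_apply]
  field_simp
  ring

theorem Complex.tendsto_rpow_neg_mul_ofReal_add_cpow (a : ℂ) (s : ℝ) :
    Tendsto (fun q : ℝ => ((q ^ (-s) : ℝ) : ℂ) * ((q : ℂ) + a) ^ (s : ℂ)) atTop (𝓝 1) := by
  have h := (continuousAt_cpow_const (b := (s : ℂ)) one_mem_slitPlane).tendsto.comp
    (tendsto_one_add_mul_ofReal_inv a)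
  rw [one_cpow] at h
  refine h.congr' ?_
  filter_upwards [eventually_gt_atTop 0] with q hq
  have hq' : (q : ℂ) ≠ 0 := ofReal_ne_zero.mpr hq.ne'
  rw [Function.comp_apply, show (q : ℂ) + a = q * (1 + a * (q : ℂ)⁻¹) by field_simp,
    ofReal_mul_cpow hq, ← mul_assoc, ← ofReal_cpow hq.le, ← ofReal_mul, ← Real.rpow_add hq,
    neg_add_cancel, Real.rpow_zero, ofReal_one, one_mul]

theorem Complex.tendsto_rpow_neg_mul_cpow_mul_cpow_mul_sum_pow (s t : ℝ) (a : ℕ → ℂ) (n : ℕ) :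
    Tendsto (fun q : ℝ => ((q ^ (-(s + t)) : ℝ) : ℂ) * ((q : ℂ) + I) ^ (s : ℂ) *
      ((q : ℂ) - I) ^ (t : ℂ) * ∑ k ∈ range n, a k * (((q : ℂ) - I) / ((q : ℂ) + I)) ^ k)
      atTop (𝓝 (∑ k ∈ range n, a k)) := by
  have hsum := tendsto_finsetSum (range n) fun k _ =>
    ((tendsto_ofReal_sub_div_ofReal_add I).pow k).const_mul (a k)
  simp only [one_pow, mul_one] at hsum
  have h := ((tendsto_rpow_neg_mul_ofReal_add_cpow I s).mul
    (tendsto_rpow_neg_mul_ofReal_add_cpow (-I) t)).mul hsum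
  rw [one_mul, one_mul] at h
  refine h.congr' ?_
  filter_upwards [eventually_gt_atTop 0] with q hq
  rw [neg_add, Real.rpow_add hq, ofReal_mul, ← sub_eq_add_neg]
  ring

/-- Large-`q` asymptotics of the analytically continued closed-form left Wilson matrix
element; here `m = j - p`. -/
theorem stmt_8 (j : ℝ) (hj : ∀ m : ℤ, 2 * j ≠ (m : ℝ)) (p : ℕ) :
    Filter.Tendsto
      (fun q : ℝ =>
        ((q ^ (-(j + (j - p))) : ℝ) : ℂ) *
          ((q : ℂ) + Complex.I) ^ (j : ℂ) *
          ((q : ℂ) - Complex.I) ^ ((j : ℂ) - p) *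
          ∑ k ∈ Finset.range (p + 1),
            pochC (-(j : ℂ)) k * pochC (((j : ℂ) - p) - j) k /
                (pochC (((j : ℂ) - p) + 1) k * (Nat.factorial k : ℂ)) *
              (((q : ℂ) - Complex.I) / ((q : ℂ) + Complex.I)) ^ k)
      Filter.atTop
      (nhds (Complex.Gamma (2 * (j : ℂ) + 1) * Complex.Gamma (((j : ℂ) - p) + 1) /
        (Complex.Gamma ((j : ℂ) + ((j : ℂ) - p) + 1) * Complex.Gamma ((j : ℂ) + 1)))) := by
  have hj' : ∀ n : ℤ, j ≠ n := fun n h => hj (2 * n) (by rw [h]; push_cast; ring)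
  have hz : ∀ k : ℕ, (j : ℂ) + ((j : ℂ) - p) + 1 ≠ -k := fun k => by
    convert ofReal_add_intCast_ne_neg_natCast hj (1 - p) k using 1; push_cast; ring
  have hw : ∀ k : ℕ, (j : ℂ) - p + 1 ≠ -k := fun k => by
    convert ofReal_add_intCast_ne_neg_natCast hj' (1 - p) k using 1; push_cast; ring
  have hc : (ascPochhammer ℂ p).eval ((j : ℂ) - p + 1) ≠ 0 := fun h => by
    obtain ⟨k, -, hk⟩ := (ascPochhammer_eval_eq_zero_iff _ _).mp h
    exact hw k (by rw [hk, neg_neg])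
  rw [show 2 * (j : ℂ) + 1 = (j : ℂ) + ((j : ℂ) - p) + 1 + p by ring,
    show (j : ℂ) + 1 = (j : ℂ) - p + 1 + p by ring, Gamma_add_nat_mul_Gamma_div_mul hz hw,
    show (j : ℂ) + ((j : ℂ) - p) + 1 = (j : ℂ) - p + 1 - -(j : ℂ) by ring,
    ← sum_ascPochhammer_eval_neg_natCast_div (-(j : ℂ)) _ p hc]
  simp only [pochC_eq_ascPochhammer_eval, show (j : ℂ) - p - j = -p by ring]
  convert tendsto_rpow_neg_mul_cpow_mul_cpow_mul_sum_pow j (j - p) _ (p + 1) using 4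
  push_cast; rfl
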